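/- arXiv:2505.00669 — 3 statements merged into one kernel-verified Lean document; each statement's English description precedes it below -/
import Mathlib

section
/- Let J_{n-1} be a real invertible symmetric persymmetric matrix, u ∈ ℝⁿ, v the reversal of u, Δ := 1 − uᵀ J_{n-1}⁻¹ u ≠ 0, D := uᵀ J_{n-1}⁻¹ v. Then for every scalar c, the quadratic expression 1 − (c, vᵀ) J_n⁻¹ (c, vᵀ)ᵀ factors as (−Δ⁻¹ c + 1 + Δ⁻¹ D)·(c + Δ − D), where J_n = [[1, uᵀ],[u, J_{n-1}]] and J_n⁻¹ is given by the Schur complement block formula. -/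
open Matrix

/-!
Expanding the block form, symmetry of `J⁻¹` collapses the quadratic form to
`Δ⁻¹ (c - D)² + vᵀ J⁻¹ v`. Symmetry and persymmetry together make `J` invariant under
reversing both indices, so `J⁻¹` is too, whence `vᵀ J⁻¹ v = uᵀ J⁻¹ u = 1 - Δ`. The expression is
therefore `Δ - Δ⁻¹ (c - D)² = (1 - Δ⁻¹ (c - D)) (c + Δ - D)`.
-/

section
variable {m R : Type*} [Fintype m] [CommRing R]

theorem Matrix.inv_submatrix_self [DecidableEq m] {A : Matrix m m R} (e : m ≃ m)
    (h : A.submatrix e e = A) :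
    A⁻¹.submatrix e e = A⁻¹ := by
  conv_rhs => rw [← h, inv_submatrix_equiv]

theorem Matrix.comp_dotProduct_mulVec_comp {B : Matrix m m R} (e : m ≃ m)
    (h : B.submatrix e e = B) (x : m → R) :
    (x ∘ e) ⬝ᵥ (B *ᵥ (x ∘ e)) = x ⬝ᵥ (B *ᵥ x) := by
  conv_lhs => rw [← h, submatrix_mulVec_equiv, Function.comp_assoc, e.self_comp_symm,
    Function.comp_id, ← dotProduct_comp_equiv_symm, Function.comp_assoc, e.self_comp_symm,
    Function.comp_id]

theorem Matrix.IsSymm.dotProduct_mulVec_comm {B : Matrix m m R} (hB : B.IsSymm) (x y : m → R) :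
    x ⬝ᵥ (B *ᵥ y) = y ⬝ᵥ (B *ᵥ x) := by
  rw [dotProduct_mulVec, ← mulVec_transpose, hB.eq, dotProduct_comm]

theorem Matrix.IsSymm.vecMul_eq_mulVec {B : Matrix m m R} (hB : B.IsSymm) (x : m → R) :
    x ᵥ* B = B *ᵥ x := by
  rw [← mulVec_transpose, hB.eq]

-- With `B = J⁻¹` and `a = Δ⁻¹` this is the Schur-complement block inverse of `[[1, uᵀ], [u, J]]`.
def Matrix.borderedInv (B : Matrix m m R) (u : m → R) (a : R) :
    Matrix (Fin 1 ⊕ m) (Fin 1 ⊕ m) R :=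
  fromBlocks (of fun _ _ => a) (replicateRow (Fin 1) (-a • (u ᵥ* B)))
    (replicateCol (Fin 1) (-a • (B *ᵥ u))) (B + a • of fun i j => (B *ᵥ u) i * (u ᵥ* B) j)

theorem Matrix.IsSymm.sumElim_dotProduct_borderedInv_mulVec_sumElim {B : Matrix m m R}
    (hB : B.IsSymm) (u v : m → R) (a c : R) :
    Sum.elim (fun _ : Fin 1 => c) v ⬝ᵥ (B.borderedInv u a *ᵥ Sum.elim (fun _ => c) v)
      = a * (c - u ⬝ᵥ (B *ᵥ v)) ^ 2 + v ⬝ᵥ (B *ᵥ v) := by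
  rw [borderedInv, hB.vecMul_eq_mulVec]
  have hD : (B *ᵥ u) ⬝ᵥ v = u ⬝ᵥ (B *ᵥ v) := by
    rw [dotProduct_comm, hB.dotProduct_mulVec_comm]
  have hrank : (of fun i j => (B *ᵥ u) i * (B *ᵥ u) j) *ᵥ v = (u ⬝ᵥ (B *ᵥ v)) • B *ᵥ u := by
    rw [← hD]; exact (vecMulVec_mulVec _ _ _).trans (op_smul_eq_smul _ _)
  have hcol (w : m → R) : replicateCol (Fin 1) w *ᵥ (fun _ => c) = c • w := by
    ext; simp [mulVec, dotProduct, mul_comm]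
  have hrow : replicateRow (Fin 1) (-a • B *ᵥ u) *ᵥ v = fun _ => -a * u ⬝ᵥ (B *ᵥ v) := by
    rw [replicateRow_mulVec_eq_const, smul_dotProduct, hD]; rfl
  have hcorner : (of fun _ _ : Fin 1 => a) *ᵥ (fun _ => c) = fun _ => a * c := by
    ext; simp [mulVec, dotProduct]
  have hconst (w : Fin 1 → R) : (fun _ => c) ⬝ᵥ w = c * w 0 := by simp [dotProduct]
  rw [fromBlocks_mulVec, sumElim_dotProduct_sumElim]
  simp only [Sum.elim_comp_inl, Sum.elim_comp_inr, add_mulVec, smul_mulVec, hrank, hcol, hrow,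
    hcorner, hconst, Pi.add_apply, dotProduct_add, dotProduct_smul, smul_eq_mul,
    hB.dotProduct_mulVec_comm v u]
  ring
end

theorem quadratic_factorization_general (n : ℕ) (J : Matrix (Fin n) (Fin n) ℝ)
    (hsymm : J.IsSymm)
    (hpersymm : ∀ i j : Fin n, J i j = J j.rev i.rev)
    (u v : Fin n → ℝ) (hv : ∀ i, v i = u i.rev)
    (hΔ : (1 : ℝ) - u ⬝ᵥ (J⁻¹ *ᵥ u) ≠ 0) (c : ℝ) :
    1 - (Sum.elim (fun _ : Fin 1 => c) v) ⬝ᵥ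
        ((Matrix.fromBlocks
            (Matrix.of fun _ _ => ((1 : ℝ) - u ⬝ᵥ (J⁻¹ *ᵥ u))⁻¹)
            (Matrix.replicateRow (Fin 1) (-(((1 : ℝ) - u ⬝ᵥ (J⁻¹ *ᵥ u))⁻¹) • (u ᵥ* J⁻¹)))
            (Matrix.replicateCol (Fin 1) (-(((1 : ℝ) - u ⬝ᵥ (J⁻¹ *ᵥ u))⁻¹) • (J⁻¹ *ᵥ u)))
            (J⁻¹ + ((1 : ℝ) - u ⬝ᵥ (J⁻¹ *ᵥ u))⁻¹ •
              Matrix.of fun i j => (J⁻¹ *ᵥ u) i * (u ᵥ* J⁻¹) j))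
          *ᵥ (Sum.elim (fun _ : Fin 1 => c) v))
      = (-((1 : ℝ) - u ⬝ᵥ (J⁻¹ *ᵥ u))⁻¹ * c + 1 +
            ((1 : ℝ) - u ⬝ᵥ (J⁻¹ *ᵥ u))⁻¹ * (u ⬝ᵥ (J⁻¹ *ᵥ v))) *
        (c + ((1 : ℝ) - u ⬝ᵥ (J⁻¹ *ᵥ u)) - u ⬝ᵥ (J⁻¹ *ᵥ v)) := by
  have hrev : J.submatrix Fin.revPerm Fin.revPerm = J := by
    ext i j
    exact (hpersymm j i).symm.trans (hsymm.apply i j)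
  have hvv : v ⬝ᵥ (J⁻¹ *ᵥ v) = u ⬝ᵥ (J⁻¹ *ᵥ u) := by
    rw [show v = u ∘ Fin.revPerm from funext hv,
      comp_dotProduct_mulVec_comp _ (inv_submatrix_self _ hrev)]
  rw [← borderedInv, hsymm.inv.sumElim_dotProduct_borderedInv_mulVec_sumElim, hvv]
  field_simp
  ring

/-- Factorization of the quadratic expression `1 − (c, vᵀ) Jₙ⁻¹ (c, vᵀ)ᵀ` where
`Jₙ⁻¹` is given by the Schur-complement block formula, `v` is the reversal of `u`,
`Δ = 1 − uᵀ J⁻¹ u ≠ 0` and `D = uᵀ J⁻¹ v`. -/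
theorem quadratic_factorization (n : ℕ) (J : Matrix (Fin n) (Fin n) ℝ)
    (hJ : IsUnit J.det) (hsymm : J.IsSymm)
    (hpersymm : ∀ i j : Fin n, J i j = J j.rev i.rev)
    (u v : Fin n → ℝ) (hv : ∀ i, v i = u i.rev)
    (hΔ : (1 : ℝ) - u ⬝ᵥ (J⁻¹ *ᵥ u) ≠ 0) (c : ℝ) :
    1 - (Sum.elim (fun _ : Fin 1 => c) v) ⬝ᵥ
        ((Matrix.fromBlocks
            (Matrix.of fun _ _ => ((1 : ℝ) - u ⬝ᵥ (J⁻¹ *ᵥ u))⁻¹)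
            (Matrix.replicateRow (Fin 1) (-(((1 : ℝ) - u ⬝ᵥ (J⁻¹ *ᵥ u))⁻¹) • (u ᵥ* J⁻¹)))
            (Matrix.replicateCol (Fin 1) (-(((1 : ℝ) - u ⬝ᵥ (J⁻¹ *ᵥ u))⁻¹) • (J⁻¹ *ᵥ u)))
            (J⁻¹ + ((1 : ℝ) - u ⬝ᵥ (J⁻¹ *ᵥ u))⁻¹ •
              Matrix.of fun i j => (J⁻¹ *ᵥ u) i * (u ᵥ* J⁻¹) j))
          *ᵥ (Sum.elim (fun _ : Fin 1 => c) v))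
      = (-((1 : ℝ) - u ⬝ᵥ (J⁻¹ *ᵥ u))⁻¹ * c + 1 +
            ((1 : ℝ) - u ⬝ᵥ (J⁻¹ *ᵥ u))⁻¹ * (u ⬝ᵥ (J⁻¹ *ᵥ v))) *
        (c + ((1 : ℝ) - u ⬝ᵥ (J⁻¹ *ᵥ u)) - u ⬝ᵥ (J⁻¹ *ᵥ v)) :=
  quadratic_factorization_general n J hsymm hpersymm u v hv hΔ c
end

section
/- Let f, g : [0,a] → ℝ be integrable and let ℰ, ℰ^g solve ∂_t ℰ = f(t) e^{2itx} conj(ℰ), ∂_t ℰ^g = g(t) e^{2itx} conj(ℰ^g), both with initial value 1 at t = 0, for fixed x ∈ ℝ. Assume ∫₀ᵃ |g| ≤ 2∫₀ᵃ |f| =: 2F. Then |ℰ(a,x) − ℰ^g(a,x)|² ≤ 2 C e^{2F} ∫₀ᵃ |f(t) − g(t)| dt, where C = e^{2F}(e^{2F} + e^{F}). -/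
open MeasureTheory Complex Set Filter ComplexConjugate

/-! The energy `‖D‖²` of `D = ℰ - ℰᵍ` satisfies `(‖D‖²)' ≤ 2|f|‖D‖² + 2|f - g|‖D‖‖ℰᵍ‖`, and the
a priori bounds `‖ℰ‖ ≤ e^F`, `‖ℰᵍ‖ ≤ e^{2F}` (the same energy argument applied to `‖ℰ‖²`) turn
the last term into the source `2C|f - g|`. Since the potentials are merely integrable, Grönwall's
inequality is proved with the integrating factor `exp (-∫₀ᵗ k)`, which is only absolutely
continuous, using the fundamental theorem of calculus for absolutely continuous functions. -/

theorem AbsolutelyContinuousOnInterval.congr {X : Type*} [PseudoMetricSpace X] {f g : ℝ → X}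
    {a b : ℝ} (hf : AbsolutelyContinuousOnInterval f a b) (hfg : EqOn f g (uIcc a b)) :
    AbsolutelyContinuousOnInterval g a b := by
  refine Tendsto.congr' ?_ hf
  filter_upwards [mem_inf_of_right (mem_principal_self _)] with E hE
  exact Finset.sum_congr rfl fun i hi ↦ by
    rw [hfg (hE.1 i hi).1, hfg (hE.1 i hi).2]

open AbsolutelyContinuousOnInterval Topology in
theorem LipschitzOnWith.comp_absolutelyContinuousOnInterval {X Y : Type*} [PseudoMetricSpace X]
    [PseudoMetricSpace Y] {g : X → Y} {K : NNReal} {s : Set X} {f : ℝ → X} {a b : ℝ}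
    (hg : LipschitzOnWith K g s) (hf : AbsolutelyContinuousOnInterval f a b)
    (hfs : MapsTo f (uIcc a b) s) : AbsolutelyContinuousOnInterval (g ∘ f) a b := by
  have hK : Tendsto (fun E : ℕ × (ℕ → ℝ × ℝ) ↦
      (K : ℝ) * ∑ i ∈ Finset.range E.1, dist (f (E.2 i).1) (f (E.2 i).2))
      (totalLengthFilter ⊓ 𝓟 (disjWithin a b)) (𝓝 0) := by
    simpa using Filter.Tendsto.const_mul (K : ℝ) hf
  refine squeeze_zero'
    (Eventually.of_forall fun E ↦ Finset.sum_nonneg fun i _ ↦ dist_nonneg) ?_ hK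
  filter_upwards [mem_inf_of_right (mem_principal_self _)] with E hE
  rw [Finset.mul_sum]
  exact Finset.sum_le_sum fun i hi ↦
    hg.dist_le_mul _ (hfs (hE.1 i hi).1) _ (hfs (hE.1 i hi).2)

theorem absolutelyContinuousOnInterval_of_hasDerivAt {f f' : ℝ → ℝ} {a b : ℝ}
    (hf : ∀ x ∈ uIcc a b, HasDerivAt f (f' x) x) (hf' : IntervalIntegrable f' volume a b) :
    AbsolutelyContinuousOnInterval f a b := by
  have hF := ((LipschitzWith.const (f a)).lipschitzOnWith (s := uIcc a b)
    |>.absolutelyContinuousOnInterval).fun_add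
    (hf'.absolutelyContinuousOnInterval_intervalIntegral left_mem_uIcc)
  refine hF.congr fun x hx ↦ ?_
  have hsub : uIcc a x ⊆ uIcc a b := uIcc_subset_uIcc left_mem_uIcc hx
  simp only
  rw [intervalIntegral.integral_eq_sub_of_hasDerivAt (fun y hy ↦ hf y (hsub hy))
    (hf'.mono_set hsub)]
  ring

theorem Real.lipschitzOnWith_exp_Iic_zero : LipschitzOnWith 1 Real.exp (Iic 0) :=
  (convex_Iic 0).lipschitzOnWith_of_nnnorm_deriv_le (fun _ _ ↦ Real.differentiableAt_exp)
    fun x hx ↦ by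
      rw [Real.deriv_exp, ← NNReal.coe_le_coe, coe_nnnorm,
        Real.norm_of_nonneg (Real.exp_nonneg x)]
      simpa using hx

theorem AbsolutelyContinuousOnInterval.le_mul_exp_integral_of_ae_deriv_le {φ k r : ℝ → ℝ}
    {a b : ℝ} (hab : a ≤ b) (hφ : AbsolutelyContinuousOnInterval φ a b)
    (hk : IntervalIntegrable k volume a b) (hk0 : ∀ t ∈ Icc a b, 0 ≤ k t)
    (hr : IntervalIntegrable r volume a b) (hr0 : ∀ t ∈ Icc a b, 0 ≤ r t)
    (hφ' : ∀ᵐ t, t ∈ Icc a b → deriv φ t ≤ k t * φ t + r t) :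
    φ b ≤ (φ a + ∫ t in a..b, r t) * Real.exp (∫ t in a..b, k t) := by
  set K : ℝ → ℝ := fun t ↦ ∫ s in a..t, k s
  have hK0 : ∀ t ∈ Icc a b, 0 ≤ K t := fun t ht ↦
    intervalIntegral.integral_nonneg ht.1 fun u hu ↦ hk0 u ⟨hu.1, hu.2.trans ht.2⟩
  have hρ : AbsolutelyContinuousOnInterval (fun t ↦ Real.exp (-K t)) a b :=
    Real.lipschitzOnWith_exp_Iic_zero.comp_absolutelyContinuousOnInterval
      (hk.absolutelyContinuousOnInterval_intervalIntegral left_mem_uIcc).fun_neg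
      fun t ht ↦ by simpa using hK0 t (uIcc_of_le hab ▸ ht)
  have hh := hφ.fun_mul hρ
  have hderiv : ∀ᵐ t, t ∈ Icc a b → deriv (fun t ↦ φ t * Real.exp (-K t)) t ≤ r t := by
    filter_upwards [hφ.ae_differentiableAt, hk.ae_hasDerivAt_integral, hφ']
      with t hφt hKt hφ't ht
    have ht' : t ∈ uIcc a b := by rwa [uIcc_of_le hab]
    have hd : HasDerivAt (fun t ↦ φ t * Real.exp (-K t))
        (deriv φ t * Real.exp (-K t) + φ t * (Real.exp (-K t) * -k t)) t :=
      (hφt ht').hasDerivAt.mul (hKt ht' a left_mem_uIcc).neg.exp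
    rw [hd.deriv]
    have hρ1 : Real.exp (-K t) ≤ 1 := Real.exp_le_one_iff.2 (by linarith [hK0 t ht])
    calc _ = (deriv φ t - k t * φ t) * Real.exp (-K t) := by ring
      _ ≤ r t * Real.exp (-K t) := by gcongr; linarith [hφ't ht]
      _ ≤ r t := mul_le_of_le_one_right (hr0 t ht) hρ1
  have hmono := intervalIntegral.integral_mono_ae_restrict hab hh.intervalIntegrable_deriv hr
    ((ae_restrict_iff' measurableSet_Icc).2 hderiv)
  rw [hh.integral_deriv_eq_sub] at hmono
  have hKa : K a = 0 := intervalIntegral.integral_same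
  rw [hKa, neg_zero, Real.exp_zero, mul_one, sub_le_iff_le_add'] at hmono
  calc φ b = φ b * Real.exp (-K b) * Real.exp (K b) := by
        rw [mul_assoc, ← Real.exp_add, neg_add_cancel, Real.exp_zero, mul_one]
    _ ≤ (φ a + ∫ t in a..b, r t) * Real.exp (K b) := by gcongr

section InnerProductSpace

variable {E : Type*} [NormedAddCommGroup E] [InnerProductSpace ℝ E]

theorem IntervalIntegrable.continuousOn_inner {f g : ℝ → E} {a b : ℝ}
    (hf : IntervalIntegrable f volume a b) (hg : ContinuousOn g (uIcc a b)) :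
    IntervalIntegrable (fun t ↦ inner ℝ (g t) (f t)) volume a b := by
  obtain ⟨M, hM⟩ := isCompact_uIcc.exists_bound_of_continuousOn hg
  refine (hf.norm.const_mul M).mono_fun'
    (((hg.mono uIoc_subset_uIcc).aestronglyMeasurable measurableSet_uIoc).inner
      hf.def'.aestronglyMeasurable) ?_
  filter_upwards [ae_restrict_mem measurableSet_uIoc] with t ht
  calc ‖inner ℝ (g t) (f t)‖ ≤ ‖g t‖ * ‖f t‖ := norm_inner_le_norm _ _
    _ ≤ M * ‖f t‖ := by gcongr; exact hM t (uIoc_subset_uIcc ht)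

theorem norm_sq_le_of_inner_deriv_le {W W' : ℝ → E} {k r : ℝ → ℝ} {a b : ℝ}
    (hab : a ≤ b) (hW : ∀ t ∈ Icc a b, HasDerivAt W (W' t) t)
    (hW' : IntervalIntegrable W' volume a b)
    (hk : IntervalIntegrable k volume a b) (hk0 : ∀ t ∈ Icc a b, 0 ≤ k t)
    (hr : IntervalIntegrable r volume a b) (hr0 : ∀ t ∈ Icc a b, 0 ≤ r t)
    (hle : ∀ t ∈ Icc a b, inner ℝ (W t) (W' t) ≤ k t * ‖W t‖ ^ 2 + r t) :
    ‖W b‖ ^ 2 ≤ (‖W a‖ ^ 2 + 2 * ∫ t in a..b, r t) * Real.exp (2 * ∫ t in a..b, k t) := by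
  have hnorm : ∀ t ∈ uIcc a b, HasDerivAt (‖W ·‖ ^ 2) (2 * inner ℝ (W t) (W' t)) t :=
    fun t ht ↦ (hW t (uIcc_of_le hab ▸ ht)).norm_sq
  have hWc : ContinuousOn W (uIcc a b) :=
    fun t ht ↦ (hW t (uIcc_of_le hab ▸ ht)).continuousAt.continuousWithinAt
  have hφ := absolutelyContinuousOnInterval_of_hasDerivAt hnorm
    ((hW'.continuousOn_inner hWc).const_mul 2)
  rw [← intervalIntegral.integral_const_mul, ← intervalIntegral.integral_const_mul]
  refine hφ.le_mul_exp_integral_of_ae_deriv_le hab (hk.const_mul 2)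
    (fun t ht ↦ by simpa using hk0 t ht) (hr.const_mul 2)
    (fun t ht ↦ by simpa using hr0 t ht)
    (ae_of_all _ fun t ht ↦ ?_)
  rw [(hnorm t (uIcc_of_le hab ▸ ht)).deriv]
  linarith [hle t ht]

end InnerProductSpace

/-- The right-hand side of the real Dirac system with potential `p` at spectral parameter `x`. -/
noncomputable def scatteringField (p : ℝ → ℝ) (x t : ℝ) (z : ℂ) : ℂ :=
  p t * cexp (2 * I * t * x) * conj z

theorem norm_scatteringField (p : ℝ → ℝ) (x t : ℝ) (z : ℂ) :
    ‖scatteringField p x t z‖ = |p t| * ‖z‖ := by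
  have : 2 * I * t * x = ((2 * t * x : ℝ) : ℂ) * I := by push_cast; ring
  rw [scatteringField, norm_mul, norm_mul, this, norm_exp_ofReal_mul_I, norm_conj, norm_real,
    Real.norm_eq_abs, mul_one]

theorem scatteringField_sub_scatteringField (p q : ℝ → ℝ) (x t : ℝ) (z w : ℂ) :
    scatteringField p x t z - scatteringField q x t w =
      scatteringField p x t (z - w) + scatteringField (p - q) x t w := by
  simp only [scatteringField, map_sub, Pi.sub_apply, ofReal_sub]
  ring

theorem IntervalIntegrable.scatteringField {p : ℝ → ℝ} {W : ℝ → ℂ} {a b : ℝ} (x : ℝ)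
    (hp : IntervalIntegrable p volume a b) (hW : ContinuousOn W (uIcc a b)) :
    IntervalIntegrable (fun t ↦ _root_.scatteringField p x t (W t)) volume a b :=
  have hpC : IntervalIntegrable (fun t ↦ (p t : ℂ)) volume a b := ⟨hp.1.ofReal, hp.2.ofReal⟩
  (hpC.mul_continuousOn (by fun_prop)).mul_continuousOn
    (continuous_conj.comp_continuousOn hW)

theorem inner_scatteringField_le (p : ℝ → ℝ) (x t : ℝ) (z : ℂ) :
    inner ℝ z (scatteringField p x t z) ≤ |p t| * ‖z‖ ^ 2 := by
  calc inner ℝ z (scatteringField p x t z) ≤ ‖z‖ * ‖scatteringField p x t z‖ :=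
        real_inner_le_norm _ _
    _ = |p t| * ‖z‖ ^ 2 := by rw [norm_scatteringField]; ring

theorem norm_le_exp_integral_abs_of_hasDerivAt_scatteringField {p : ℝ → ℝ} {W : ℝ → ℂ}
    {a x : ℝ} (hp : IntervalIntegrable p volume 0 a) (hW0 : W 0 = 1)
    (hW : ∀ t ∈ Icc 0 a, HasDerivAt W (scatteringField p x t (W t)) t) {t : ℝ}
    (ht : t ∈ Icc 0 a) : ‖W t‖ ≤ Real.exp (∫ s in 0..t, |p s|) := by
  have hsub : Icc 0 t ⊆ Icc 0 a := Icc_subset_Icc_right ht.2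
  have hpt : IntervalIntegrable p volume 0 t := hp.mono_set (by
    rw [uIcc_of_le ht.1, uIcc_of_le (ht.1.trans ht.2)]; exact hsub)
  have hWc : ContinuousOn W (uIcc 0 t) := fun s hs ↦
    (hW s (hsub (uIcc_of_le ht.1 ▸ hs))).continuousAt.continuousWithinAt
  have hsq := norm_sq_le_of_inner_deriv_le ht.1 (fun s hs ↦ hW s (hsub hs))
    (hpt.scatteringField x hWc) hpt.abs (fun s _ ↦ abs_nonneg (p s)) intervalIntegrable_const
    (fun _ _ ↦ le_rfl) (fun s _ ↦ by simpa using inner_scatteringField_le p x s (W s))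
  rw [hW0, norm_one, intervalIntegral.integral_zero, mul_zero, add_zero, one_pow, one_mul,
    two_mul, Real.exp_add, ← sq] at hsq
  exact (sq_le_sq₀ (norm_nonneg _) (Real.exp_nonneg _)).1 hsq

theorem norm_sub_sq_le_of_hasDerivAt_scatteringField {f g : ℝ → ℝ} {E Eg : ℝ → ℂ}
    {a x ME Mg : ℝ} (ha : 0 ≤ a) (hf : IntervalIntegrable f volume 0 a)
    (hg : IntervalIntegrable g volume 0 a) (h0 : E 0 = Eg 0)
    (hE : ∀ t ∈ Icc 0 a, HasDerivAt E (scatteringField f x t (E t)) t)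
    (hEg : ∀ t ∈ Icc 0 a, HasDerivAt Eg (scatteringField g x t (Eg t)) t)
    (hME : ∀ t ∈ Icc 0 a, ‖E t‖ ≤ ME) (hMg : ∀ t ∈ Icc 0 a, ‖Eg t‖ ≤ Mg) :
    ‖E a - Eg a‖ ^ 2 ≤
      2 * (Mg * (Mg + ME)) * Real.exp (2 * ∫ t in 0..a, |f t|) * ∫ t in 0..a, |f t - g t| := by
  have h0a : (0 : ℝ) ∈ Icc 0 a := left_mem_Icc.2 ha
  have hME0 : 0 ≤ ME := (norm_nonneg _).trans (hME 0 h0a)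
  have hMg0 : 0 ≤ Mg := (norm_nonneg _).trans (hMg 0 h0a)
  have hD : ∀ t ∈ Icc 0 a, HasDerivAt (fun t ↦ E t - Eg t)
      (scatteringField f x t (E t - Eg t) + scatteringField (f - g) x t (Eg t)) t :=
    fun t ht ↦ scatteringField_sub_scatteringField f g x t _ _ ▸ (hE t ht).sub (hEg t ht)
  have hEc : ContinuousOn E (uIcc 0 a) := fun t ht ↦
    (hE t (uIcc_of_le ha ▸ ht)).continuousAt.continuousWithinAt
  have hEgc : ContinuousOn Eg (uIcc 0 a) := fun t ht ↦
    (hEg t (uIcc_of_le ha ▸ ht)).continuousAt.continuousWithinAt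
  have hsq := norm_sq_le_of_inner_deriv_le ha hD
    ((hf.scatteringField x (hEc.sub hEgc)).add ((hf.sub hg).scatteringField x hEgc))
    hf.abs (fun t _ ↦ abs_nonneg (f t)) ((hf.sub hg).abs.const_mul (Mg * (Mg + ME)))
    (fun t _ ↦ by positivity) fun t ht ↦ ?_
  · rw [h0, sub_self, norm_zero, intervalIntegral.integral_const_mul] at hsq
    linarith
  · have hsource : inner ℝ (E t - Eg t) (scatteringField (f - g) x t (Eg t)) ≤
        Mg * (Mg + ME) * |f t - g t| :=
      calc _ ≤ ‖E t - Eg t‖ * (|f t - g t| * ‖Eg t‖) :=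
            (real_inner_le_norm _ _).trans_eq (by rw [norm_scatteringField]; rfl)
        _ ≤ (ME + Mg) * (|f t - g t| * Mg) := by
            gcongr
            · exact (norm_sub_le _ _).trans (add_le_add (hME t ht) (hMg t ht))
            · exact hMg t ht
        _ = Mg * (Mg + ME) * |f t - g t| := by ring
    rw [inner_add_right]
    linarith [inner_scatteringField_le f x t (E t - Eg t)]

/-- Stability of the scattering function under perturbation of the potential:
if `ℰ` and `ℰᵍ` solve the scattering ODE with potentials `f` and `g`, both equal
to `1` at `t = 0`, and `∫₀ᵃ|g| ≤ 2∫₀ᵃ|f| = 2F`, then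
`|ℰ(a,x) − ℰᵍ(a,x)|² ≤ 2 C e^{2F} ∫₀ᵃ |f − g|` with `C = e^{2F}(e^{2F} + e^F)`. -/
theorem scattering_stability (a x : ℝ) (ha : 0 ≤ a) (f g : ℝ → ℝ)
    (hf : IntegrableOn f (Set.Icc 0 a)) (hg : IntegrableOn g (Set.Icc 0 a))
    (hgf : (∫ s in (0 : ℝ)..a, |g s|) ≤ 2 * ∫ s in (0 : ℝ)..a, |f s|)
    (E Eg : ℝ → ℂ) (hE0 : E 0 = 1) (hEg0 : Eg 0 = 1)
    (hE : ∀ t ∈ Set.Icc 0 a, HasDerivAt E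
      ((f t : ℂ) * Complex.exp (2 * Complex.I * t * x) * (starRingEnd ℂ) (E t)) t)
    (hEg : ∀ t ∈ Set.Icc 0 a, HasDerivAt Eg
      ((g t : ℂ) * Complex.exp (2 * Complex.I * t * x) * (starRingEnd ℂ) (Eg t)) t) :
    ‖E a - Eg a‖ ^ 2 ≤
      2 * (Real.exp (2 * ∫ s in (0 : ℝ)..a, |f s|) *
          (Real.exp (2 * ∫ s in (0 : ℝ)..a, |f s|) +
            Real.exp (∫ s in (0 : ℝ)..a, |f s|))) *
        Real.exp (2 * ∫ s in (0 : ℝ)..a, |f s|) *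
        ∫ s in (0 : ℝ)..a, |f s - g s| := by
  have hfi := (intervalIntegrable_iff_integrableOn_Icc_of_le ha).2 hf
  have hgi := (intervalIntegrable_iff_integrableOn_Icc_of_le ha).2 hg
  have hmono {p : ℝ → ℝ} (hp : IntervalIntegrable p volume 0 a) {t : ℝ} (ht : t ∈ Icc 0 a) :
      ∫ s in 0..t, |p s| ≤ ∫ s in 0..a, |p s| :=
    intervalIntegral.integral_mono_interval le_rfl ht.1 ht.2
      (ae_of_all _ fun s ↦ abs_nonneg (p s)) hp.abs
  refine norm_sub_sq_le_of_hasDerivAt_scatteringField ha hfi hgi (hE0.trans hEg0.symm) hE hEg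
    (fun t ht ↦ ?_) (fun t ht ↦ ?_)
  · exact (norm_le_exp_integral_abs_of_hasDerivAt_scatteringField hfi hE0 hE ht).trans
      (Real.exp_le_exp.2 (hmono hfi ht))
  · exact (norm_le_exp_integral_abs_of_hasDerivAt_scatteringField hgi hEg0 hEg ht).trans
      (Real.exp_le_exp.2 ((hmono hgi ht).trans hgf))
end

section
/- Let μ be a positive measure on ℝ with period 2π (μ(S + 2π) = μ(S)) that is locally finite and has locally infinite support. Then for every d > 0 there exists δ > 0 such that every interval I ⊂ ℝ with |I| sufficiently large intersects at least d|I| pairwise disjoint intervals J with μ(J) > δ and |J| > δ. -/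
/-!
An accumulation point of the support in `[-C, C]` gives a window of width `π` containing
arbitrarily many points of the support; take `N ≥ 4πd` of them. Balls of a small radius `ε` around
these points have positive measure, and by periodicity so do all their translates by `2πℤ`. These
translates are pairwise disjoint, because the points are `2ε`-separated and the window with its
margins is shorter than a period. An interval of length `ℓ ≥ 6π` contains at least `ℓ / (4π)` whole
translates of the window, hence at least `N ℓ / (4π) ≥ d ℓ` disjoint balls, each a
`(μ, δ)`-interval once `δ` is below `2ε` and below the measures of the `N` balls.
-/

open MeasureTheory Metric Set Filter Topology

section Periodic

variable {μ : Measure ℝ} {p : ℝ}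

theorem map_add_intCast_mul_eq (hper : μ.map (· + p) = μ) (n : ℤ) :
    μ.map (· + n * p) = μ := by
  have hnat (m : ℕ) : μ.map (· + m * p) = μ := by
    simpa [add_right_iterate, nsmul_eq_mul] using
      ((MeasurePreserving.mk (measurable_add_const p) hper).iterate m).map_eq
  obtain ⟨m, rfl | rfl⟩ := Int.eq_nat_or_neg n
  · exact_mod_cast hnat m
  · conv_lhs => rw [← hnat m]
    rw [Measure.map_map (measurable_add_const _) (measurable_add_const _)]
    convert Measure.map_id using 2
    funext x; simp only [Function.comp, id, Int.cast_neg, Int.cast_natCast]; ring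

theorem measure_ball_add_intCast_mul (hper : μ.map (· + p) = μ) (n : ℤ) (x r : ℝ) :
    μ (ball (x + n * p) r) = μ (ball x r) := by
  conv_lhs => rw [← map_add_intCast_mul_eq hper n]
  rw [Measure.map_apply (measurable_add_const _) measurableSet_ball]
  congr 1; ext y; simp [Real.dist_eq]

end Periodic

theorem pairwise_disjoint_ball_add_intCast_mul {ι : Type*} {x : ι → ℝ} {s p ε : ℝ}
    (hx : ∀ i, x i ∈ Icc s (s + p - 2 * ε)) (hsep : Pairwise fun i j => 2 * ε ≤ |x i - x j|) :
    Pairwise fun q q' : ι × ℤ =>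
      Disjoint (ball (x q.1 + q.2 * p) ε) (ball (x q'.1 + q'.2 * p) ε) := by
  rintro ⟨i, k⟩ ⟨j, l⟩ hne
  refine ball_disjoint_ball ?_
  rw [Real.dist_eq]
  by_cases hkl : k = l
  · subst hkl
    have hij : i ≠ j := fun h => hne (by rw [h])
    simpa [two_mul] using hsep hij
  · have hkl' : (1 : ℝ) ≤ |(k : ℝ) - l| := by
      rw [← Int.cast_sub, ← Int.cast_abs, ← Int.cast_one, Int.cast_le]
      exact Int.one_le_abs (sub_ne_zero.mpr hkl)
    have hshift : p ≤ |(k - l) * p| := by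
      rw [abs_mul]; nlinarith [le_abs_self p, abs_nonneg p]
    have hij : |x i - x j| ≤ p - 2 * ε := by
      rw [abs_sub_le_iff]; constructor <;> linarith [(hx i).1, (hx i).2, (hx j).1, (hx j).2]
    have := abs_sub_abs_le_abs_sub ((k - l) * p) (x j - x i)
    rw [show (k - l) * p - (x j - x i) = x i + k * p - (x j + l * p) by ring,
      abs_sub_comm (x j)] at this
    linarith

theorem exists_add_intCast_mul_mem_Icc {p w : ℝ} (hp : 0 < p) (s a b : ℝ) :
    ∃ k₀ : ℤ, ∀ j : ℕ, j < ⌊(b - a - w) / p⌋₊ → ∀ y ∈ Icc s (s + w),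
      y + ((k₀ + j : ℤ) : ℝ) * p ∈ Icc a b := by
  refine ⟨⌈(a - s) / p⌉, fun j hj y hy => ?_⟩
  have hk₀ : a - s ≤ ⌈(a - s) / p⌉ * p := (div_le_iff₀ hp).mp (Int.le_ceil _)
  have hk₀' : ⌈(a - s) / p⌉ * p < a - s + p := by
    have := mul_lt_mul_of_pos_right (Int.ceil_lt_add_one ((a - s) / p)) hp
    rwa [add_mul, div_mul_cancel₀ _ hp.ne', one_mul] at this
  have hj' : (j + 1) * p ≤ b - a - w :=
    (le_div_iff₀ hp).mp (by exact_mod_cast (Nat.le_floor_iff' j.succ_ne_zero).mp hj)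
  push_cast
  constructor <;> nlinarith [hy.1, hy.2, (j.cast_nonneg : (0:ℝ) ≤ j)]

theorem Set.Infinite.exists_closedBall_inter_infinite {X : Type*} [MetricSpace X]
    [ProperSpace X] {S : Set X} (hS : S.Infinite) (hb : Bornology.IsBounded S) {r : ℝ}
    (hr : 0 < r) : ∃ c, (closedBall c r ∩ S).Infinite := by
  obtain ⟨c, -, hc⟩ := hS.exists_accPt_of_subset_isCompact hb.isCompact_closure subset_closure
  exact ⟨c, Set.Infinite.of_accPt (hc.nhds_inter (closedBall_mem_nhds c hr))⟩

theorem Filter.Eventually.exists_pos {q : ℝ → Prop} (h : ∀ᶠ ε in 𝓝 0, q ε) : ∃ ε > 0, q ε :=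
  ((h.filter_mono (nhdsWithin_le_nhds (s := Ioi 0))).and self_mem_nhdsWithin).exists.imp
    fun _ h => ⟨h.2, h.1⟩

theorem eventually_pairwise_two_mul_le_abs_sub {ι : Type*} [Finite ι] {x : ι → ℝ}
    (hx : Function.Injective x) : ∀ᶠ ε in 𝓝 0, Pairwise fun i j => 2 * ε ≤ |x i - x j| := by
  refine eventually_all.2 fun i => eventually_all.2 fun j =>
    eventually_imp_distrib_left.2 fun hij => ?_
  have hpos : 0 < |x i - x j| := abs_pos.2 (sub_ne_zero.2 (hx.ne hij))
  filter_upwards [eventually_le_nhds (half_pos hpos)] with ε hε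
  linarith

theorem div_two_mul_le_floor_sub_div {p ℓ : ℝ} (hp : 0 < p) (hℓ : 3 * p ≤ ℓ) :
    ℓ / (2 * p) ≤ ⌊(ℓ - p / 2) / p⌋₊ := by
  have hfloor := Nat.sub_one_lt_floor ((ℓ - p / 2) / p)
  have hgap : (ℓ - p / 2) / p - 1 - ℓ / (2 * p) = (ℓ - 3 * p) / (2 * p) := by
    field_simp; ring
  have : 0 ≤ (ℓ - 3 * p) / (2 * p) := div_nonneg (by linarith) (by positivity)
  linarith

def IsDisjointDeltaFamily {ι : Type*} (μ : Measure ℝ) (δ a b : ℝ) (c e : ι → ℝ) : Prop :=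
  (∀ i, δ < (μ (Ioo (c i) (e i))).toReal ∧ δ < e i - c i ∧ (Ioo (c i) (e i) ∩ Icc a b).Nonempty) ∧
    Pairwise fun i j => Disjoint (Ioo (c i) (e i)) (Ioo (c j) (e j))

theorem IsDisjointDeltaFamily.comp {ι κ : Type*} {μ : Measure ℝ} {δ a b : ℝ} {c e : ι → ℝ}
    (h : IsDisjointDeltaFamily μ δ a b c e) {f : κ → ι} (hf : Function.Injective f) :
    IsDisjointDeltaFamily μ δ a b (c ∘ f) (e ∘ f) :=
  ⟨fun i => h.1 (f i), h.2.comp_of_injective hf⟩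

theorem exists_isDisjointDeltaFamily {μ : Measure ℝ} [IsLocallyFiniteMeasure μ] {p : ℝ}
    (hper : μ.map (· + p) = μ) (hp : 0 < p) {F : Finset ℝ} {t : ℝ}
    (hFt : ↑F ⊆ closedBall t (p / 4)) (hFμ : ∀ x ∈ F, ∀ ε > 0, 0 < μ (ball x ε)) :
    ∃ δ > 0, ∀ a b : ℝ, ∃ c e : F × Fin ⌊(b - a - p / 2) / p⌋₊ → ℝ,
      IsDisjointDeltaFamily μ δ a b c e := by
  have hFwin (x : F) : (x : ℝ) ∈ Icc (t - p / 4) (t + p / 4) := by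
    rw [← Real.closedBall_eq_Icc]; exact hFt x.2
  obtain ⟨ε, hε, hεp, hsep⟩ := ((eventually_le_nhds (by positivity : (0 : ℝ) < p / 4)).and
    (eventually_pairwise_two_mul_le_abs_sub (Subtype.val_injective (p := (· ∈ F))))).exists_pos
  have hμε (x : F) : 0 < (μ (ball (x : ℝ) ε)).toReal :=
    ENNReal.toReal_pos (hFμ x x.2 ε hε).ne' measure_ball_lt_top.ne
  obtain ⟨δ, hδ, hδε, hδμ⟩ := ((eventually_lt_nhds (by positivity : (0 : ℝ) < 2 * ε)).and
    (eventually_all.2 fun x : F => eventually_lt_nhds (hμε x))).exists_pos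
  refine ⟨δ, hδ, fun a b => ?_⟩
  obtain ⟨k₀, hk₀⟩ := exists_add_intCast_mul_mem_Icc (w := p / 2) hp (t - p / 4) a b
  let n : F × Fin ⌊(b - a - p / 2) / p⌋₊ → F × ℤ := fun q => (q.1, k₀ + (q.2 : ℕ))
  have hn : Function.Injective n := by
    intro q q' h
    simp only [n, Prod.mk.injEq, add_right_inj, Nat.cast_inj] at h
    exact Prod.ext h.1 (Fin.ext h.2)
  let y : F × ℤ → ℝ := fun q => q.1 + q.2 * p
  refine ⟨fun q => y (n q) - ε, fun q => y (n q) + ε, fun q => ?_, ?_⟩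
  · have hy : y (n q) ∈ Icc a b := hk₀ _ q.2.2 _ (by convert hFwin q.1 using 2; ring)
    refine ⟨?_, by linarith, y (n q), ⟨by linarith, by linarith⟩, hy⟩
    rw [← Real.ball_eq_Ioo, measure_ball_add_intCast_mul hper]
    exact hδμ _
  · have hdisj := (pairwise_disjoint_ball_add_intCast_mul (x := fun x : F => (x : ℝ))
      (s := t - p / 4) (p := p) (fun x => ⟨(hFwin x).1, by linarith [(hFwin x).2]⟩)
      hsep).comp_of_injective hn
    simpa only [← Real.ball_eq_Ioo] using hdisj

/-- A `2π`-periodic locally finite positive measure on `ℝ` with locally infinite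
support satisfies the second Paley–Wiener sampling condition: for every `d > 0`
there is `δ > 0` such that every sufficiently long interval `[a,b]` intersects at
least `d(b − a)` pairwise disjoint `(μ,δ)`-intervals. -/
theorem periodic_measure_sampling_condition
    (μ : Measure ℝ) [IsLocallyFiniteMeasure μ]
    (hper : μ.map (fun x => x + 2 * Real.pi) = μ)
    (hsupp : ∃ C > 0, (Set.Icc (-C) C ∩
      {x : ℝ | ∀ ε > 0, 0 < μ (Set.Ioo (x - ε) (x + ε))}).Infinite) :
    ∀ d > 0, ∃ δ > 0, ∃ L > 0, ∀ a b : ℝ, L ≤ b - a →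
      ∃ (k : ℕ) (c e : Fin k → ℝ),
        d * (b - a) ≤ (k : ℝ) ∧
        (∀ i, δ < (μ (Set.Ioo (c i) (e i))).toReal ∧ δ < e i - c i ∧
          (Set.Ioo (c i) (e i) ∩ Set.Icc a b).Nonempty) ∧
        Pairwise fun i j => Disjoint (Set.Ioo (c i) (e i)) (Set.Ioo (c j) (e j)) := by
  rintro d -
  obtain ⟨C, -, hinf⟩ := hsupp
  set p := 2 * Real.pi
  have hp : 0 < p := by positivity
  obtain ⟨t, ht⟩ := hinf.exists_closedBall_inter_infinite
    ((isBounded_Icc (-C) C).subset inter_subset_left) (by positivity : 0 < p / 4)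
  obtain ⟨F, hFt, hFcard⟩ := ht.exists_subset_card_eq ⌈2 * p * d⌉₊
  obtain ⟨δ, hδ, hfamily⟩ := exists_isDisjointDeltaFamily hper hp (hFt.trans inter_subset_left)
    fun x hx ε hε => by rw [Real.ball_eq_Ioo]; exact (hFt hx).2.2 ε hε
  refine ⟨δ, hδ, 3 * p, by positivity, fun a b hab => ?_⟩
  obtain ⟨c, e, hce⟩ := hfamily a b
  let σ := (Fintype.equivFin (F × Fin ⌊(b - a - p / 2) / p⌋₊)).symm
  have hcount : d * (b - a) ≤ Fintype.card (F × Fin ⌊(b - a - p / 2) / p⌋₊) := calc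
    d * (b - a) = 2 * p * d * ((b - a) / (2 * p)) := by field_simp
    _ ≤ ⌈2 * p * d⌉₊ * ⌊(b - a - p / 2) / p⌋₊ :=
      mul_le_mul (Nat.le_ceil _) (div_two_mul_le_floor_sub_div hp hab)
        (div_nonneg (by linarith) (by positivity)) (by positivity)
    _ = _ := by simp [hFcard]
  exact ⟨_, c ∘ σ, e ∘ σ, hcount, (hce.comp σ.injective).1, (hce.comp σ.injective).2⟩
end
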